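/- Let W be an n×n symmetric matrix, L_{[−W]} = D_{[−W]} − (−W) its Laplacian-style decomposition where (D_{[−W]})_ii = −Σ_j W_ij. Then λ_2(D_{[𝟙𝟙^T + σW]} − (𝟙𝟙^T + σW)) > 0 if and only if λ_max(L_{[−W]}) < n/σ, for any σ > 0, where L_{[−W]} = D_{[−W]} + W restricted in the sense above. -/

import Mathlib

/-!
Write `J` for the all-ones matrix and `A = L_{J + σW}`. Both `A` and `L = L_{[-W]}` are
Laplacians, and linearity of `M ↦ L_M` together with `L_J = n • 1 - J` gives
`A + J = n • 1 - σ • L`. The right-hand side is positive definite iff every eigenvalue of `L`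
is below `n / σ`. On the other side, `λ₂(A) > 0` means that at most one eigenvalue of `A` is
nonpositive, which (a two-dimensional Courant–Fischer argument) is equivalent to the quadratic
form of `A` being positive on some hyperplane `v^⊥`. Since `A 𝟙 = 0`, shifting a vector by a
multiple of `𝟙` does not change its `A`-energy, and this turns positivity on `v^⊥` into positive
definiteness of `A + J = A + 𝟙𝟙ᵀ`.
-/

open Matrix

/-- The `k`-th smallest eigenvalue of a Hermitian matrix (sorted in increasing order). -/
noncomputable def eigSorted {n : ℕ} {M : Matrix (Fin n) (Fin n) ℝ}
    (hM : M.IsHermitian) : Fin n → ℝ :=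
  hM.eigenvalues ∘ Tuple.sort hM.eigenvalues

theorem lt_comp_sort_one_iff {α : Type*} [LinearOrder α] {n : ℕ} (f : Fin n → α) (a : α)
    (h : 1 < n) : a < (f ∘ Tuple.sort f) ⟨1, h⟩ ↔ ∃ k₀, ∀ k ≠ k₀, a < f k := by
  set τ := Tuple.sort f
  have hmono : Monotone (f ∘ τ) := Tuple.monotone_sort f
  constructor
  · refine fun ha => ⟨τ ⟨0, by omega⟩, fun k hk => ?_⟩
    have h1k : (⟨1, h⟩ : Fin n) ≤ τ.symm k := by
      rw [Fin.le_def, Nat.one_le_iff_ne_zero]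
      exact fun h0 => hk (by rw [← τ.apply_symm_apply k, (Fin.ext h0 : τ.symm k = ⟨0, _⟩)])
    simpa using ha.trans_le (hmono h1k)
  · rintro ⟨k₀, hk₀⟩
    by_cases h1 : τ ⟨1, h⟩ = k₀
    · have h0 : τ ⟨0, by omega⟩ ≠ k₀ := by
        rw [← h1]
        exact τ.injective.ne (by simp)
      exact (hk₀ _ h0).trans_le (hmono (Fin.mk_le_mk.mpr zero_le_one))
    · exact hk₀ _ h1

theorem ciSup_lt_iff_of_finite {ι α : Type*} [Finite ι] [Nonempty ι]
    [ConditionallyCompleteLinearOrder α] (f : ι → α) (a : α) :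
    (⨆ k, f k) < a ↔ ∀ k, f k < a := by
  obtain ⟨k₀, hk₀⟩ := exists_eq_ciSup_of_finite (f := f)
  exact ⟨fun h k => (le_ciSup (Finite.bddAbove_range f) k).trans_lt h, fun h => hk₀ ▸ h k₀⟩

namespace Matrix

theorem posDef_smul_iff {ι : Type*} {M : Matrix ι ι ℝ} {c : ℝ} (hc : 0 < c) :
    (c • M).PosDef ↔ M.PosDef :=
  ⟨fun h => by simpa [smul_smul, inv_mul_cancel₀ hc.ne'] using h.smul (inv_pos.mpr hc),
    fun h => h.smul hc⟩

variable {ι : Type*} [Fintype ι]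

section Laplacian

variable [DecidableEq ι] {R : Type*} [CommRing R]

variable (ι R) in
def laplacian : Matrix ι ι R →ₗ[R] Matrix ι ι R where
  toFun M := diagonal (fun i => ∑ j, M i j) - M
  map_add' M N := by
    ext i j
    simp only [Matrix.add_apply, Matrix.sub_apply, diagonal_apply, Finset.sum_add_distrib]
    split_ifs <;> ring
  map_smul' c M := by
    ext i j
    simp only [Matrix.smul_apply, Matrix.sub_apply, diagonal_apply, smul_eq_mul,
      ← Finset.mul_sum, RingHom.id_apply]
    split_ifs <;> ring

theorem laplacian_apply (M : Matrix ι ι R) :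
    laplacian ι R M = diagonal (fun i => ∑ j, M i j) - M := rfl

theorem laplacian_mulVec_one (M : Matrix ι ι R) : laplacian ι R M *ᵥ 1 = 0 := by
  ext i
  simp [laplacian_apply, mulVec, dotProduct, diagonal_apply]

theorem laplacian_allOnes :
    laplacian ι R (of fun _ _ => 1) = (Fintype.card ι : R) • 1 - of fun _ _ => 1 := by
  rw [laplacian_apply]
  congr 1
  simp [smul_one_eq_diagonal]

end Laplacian

def PosDefOnOrthogonal (B : Matrix ι ι ℝ) (v : ι → ℝ) : Prop :=
  ∀ x, x ≠ 0 → v ⬝ᵥ x = 0 → 0 < x ⬝ᵥ (B *ᵥ x)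

theorem dotProduct_allOnes_mulVec (x : ι → ℝ) :
    x ⬝ᵥ ((of fun _ _ => (1 : ℝ)) *ᵥ x) = (1 ⬝ᵥ x) ^ 2 := by
  simp [mulVec, dotProduct, sq, Finset.sum_mul]

namespace IsHermitian

variable {B : Matrix ι ι ℝ}

theorem dotProduct_mulVec_comm (hB : B.IsHermitian) (x y : ι → ℝ) :
    x ⬝ᵥ (B *ᵥ y) = y ⬝ᵥ (B *ᵥ x) := by
  rw [dotProduct_mulVec, ← mulVec_transpose, ← conjTranspose_eq_transpose_of_trivial, hB.eq,
    dotProduct_comm]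

theorem dotProduct_mulVec_add_smul (hB : B.IsHermitian) {u : ι → ℝ} (hu : B *ᵥ u = 0)
    (x : ι → ℝ) (c : ℝ) : (x + c • u) ⬝ᵥ (B *ᵥ (x + c • u)) = x ⬝ᵥ (B *ᵥ x) := by
  rw [mulVec_add, mulVec_smul, hu, smul_zero, add_zero, add_dotProduct, smul_dotProduct,
    hB.dotProduct_mulVec_comm u, hu, dotProduct_zero, smul_zero, add_zero]

theorem posDef_add_allOnes_iff (hB : B.IsHermitian) (h1 : B *ᵥ 1 = 0) :
    (B + of fun _ _ => 1).PosDef ↔ ∃ v, B.PosDefOnOrthogonal v := by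
  have hquad (x : ι → ℝ) :
      star x ⬝ᵥ ((B + of fun _ _ => 1) *ᵥ x) = x ⬝ᵥ (B *ᵥ x) + (1 ⬝ᵥ x) ^ 2 := by
    rw [star_trivial, add_mulVec, dotProduct_add, dotProduct_allOnes_mulVec]
  constructor
  · refine fun hpos => ⟨1, fun x hx h1x => ?_⟩
    have := hpos.dotProduct_mulVec_pos hx
    rwa [hquad, h1x, zero_pow two_ne_zero, add_zero] at this
  · rintro ⟨v, hv⟩
    refine .of_dotProduct_mulVec_pos (hB.add (by ext; simp)) fun x hx => ?_
    rw [hquad]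
    have hv1 : v ⬝ᵥ 1 ≠ 0 := by
      intro h
      have hne : (1 : ι → ℝ) ≠ 0 := fun h0 => hx (funext fun i => by simpa using congrFun h0 i)
      simpa [h1] using hv 1 hne h
    -- project `x` onto `v^⊥` along `𝟙`
    set c := v ⬝ᵥ x / v ⬝ᵥ 1
    have hshift := hB.dotProduct_mulVec_add_smul h1 x (-c)
    by_cases hy : x + (-c) • 1 = 0
    · have hx1 : x = c • 1 := by rw [← sub_eq_zero, sub_eq_add_neg, ← neg_smul, hy]
      have h1x : 1 ⬝ᵥ x ≠ 0 := by
        intro h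
        apply hx
        rw [← dotProduct_self_eq_zero]
        nth_rw 1 [hx1]
        rw [smul_dotProduct, h, smul_zero]
      rw [hy, zero_dotProduct] at hshift
      rw [← hshift, zero_add]
      positivity
    · have := hv _ hy (by simp [c, dotProduct_add, dotProduct_smul, hv1])
      rw [hshift] at this
      positivity

variable [DecidableEq ι] (hB : B.IsHermitian)

theorem eigenvectorBasis_dotProduct (j k : ι) :
    ⇑(hB.eigenvectorBasis j) ⬝ᵥ ⇑(hB.eigenvectorBasis k) = if j = k then 1 else 0 := by
  have := orthonormal_iff_ite.mp hB.eigenvectorBasis.orthonormal j k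
  rw [EuclideanSpace.inner_eq_star_dotProduct] at this
  simpa [dotProduct_comm] using this

theorem sum_dotProduct_smul_eigenvectorBasis (x : ι → ℝ) :
    ∑ k, (⇑(hB.eigenvectorBasis k) ⬝ᵥ x) • ⇑(hB.eigenvectorBasis k) = x := by
  have := congrArg WithLp.ofLp (hB.eigenvectorBasis.sum_repr' (WithLp.toLp 2 x))
  simpa [EuclideanSpace.inner_eq_star_dotProduct, dotProduct_comm] using this

theorem dotProduct_mulVec_eq_sum (x : ι → ℝ) :
    x ⬝ᵥ (B *ᵥ x) = ∑ k, hB.eigenvalues k * (⇑(hB.eigenvectorBasis k) ⬝ᵥ x) ^ 2 := by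
  conv_lhs => enter [2, 2]; rw [← hB.sum_dotProduct_smul_eigenvectorBasis x]
  simp only [mulVec_sum, mulVec_smul, mulVec_eigenvectorBasis, smul_smul, dotProduct_sum,
    dotProduct_smul, smul_eq_mul]
  exact Finset.sum_congr rfl fun k _ => by rw [dotProduct_comm x]; ring

theorem exists_posDefOnOrthogonal_iff [Nonempty ι] :
    (∃ v, B.PosDefOnOrthogonal v) ↔ ∃ k₀, ∀ k ≠ k₀, 0 < hB.eigenvalues k := by
  constructor
  · rintro ⟨v, hv⟩
    by_contra! hneg
    obtain ⟨k₁, -, hk₁⟩ := hneg (Classical.arbitrary ι)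
    obtain ⟨k₂, hk₁₂, hk₂⟩ := hneg k₁
    set e₁ := ⇑(hB.eigenvectorBasis k₁)
    set e₂ := ⇑(hB.eigenvectorBasis k₂)
    -- the plane spanned by `e₁, e₂` meets `v^⊥`, and the form is `≤ 0` on that plane
    obtain ⟨a, b, hab, hvab⟩ : ∃ a b : ℝ, (a ≠ 0 ∨ b ≠ 0) ∧ v ⬝ᵥ (a • e₁ + b • e₂) = 0 := by
      by_cases h : v ⬝ᵥ e₁ = 0
      · exact ⟨1, 0, by simp, by simpa using h⟩
      · refine ⟨v ⬝ᵥ e₂, -(v ⬝ᵥ e₁), Or.inr (neg_ne_zero.mpr h), ?_⟩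
        simp only [dotProduct_add, dotProduct_smul, smul_eq_mul]
        ring
    have hy : a • e₁ + b • e₂ ≠ 0 := by
      intro h0
      have h1 := congrArg (e₁ ⬝ᵥ ·) h0
      have h2 := congrArg (e₂ ⬝ᵥ ·) h0
      simp only [e₁, e₂, dotProduct_add, dotProduct_smul, dotProduct_zero,
        eigenvectorBasis_dotProduct, hk₁₂, hk₁₂.symm, ↓reduceIte, smul_eq_mul, mul_one, mul_zero,
        add_zero, zero_add] at h1 h2
      tauto
    have := hv _ hy hvab
    simp only [e₁, e₂, mulVec_add, mulVec_smul, mulVec_eigenvectorBasis, dotProduct_add,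
      dotProduct_smul, add_dotProduct, smul_dotProduct, eigenvectorBasis_dotProduct, hk₁₂,
      hk₁₂.symm, ↓reduceIte, smul_eq_mul, mul_one, mul_zero, add_zero, zero_add] at this
    nlinarith [mul_nonpos_of_nonneg_of_nonpos (sq_nonneg a) hk₁,
      mul_nonpos_of_nonneg_of_nonpos (sq_nonneg b) hk₂]
  · rintro ⟨k₀, hk₀⟩
    refine ⟨hB.eigenvectorBasis k₀, fun x hx hk₀x => ?_⟩
    obtain ⟨k, hk⟩ : ∃ k, ⇑(hB.eigenvectorBasis k) ⬝ᵥ x ≠ 0 := by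
      by_contra! h
      exact hx (by simpa [h] using (hB.sum_dotProduct_smul_eigenvectorBasis x).symm)
    have hkk₀ : k ≠ k₀ := by
      rintro rfl
      exact hk hk₀x
    rw [hB.dotProduct_mulVec_eq_sum]
    refine Finset.sum_pos' (fun j _ => ?_) ⟨k, Finset.mem_univ _, ?_⟩
    · rcases eq_or_ne j k₀ with rfl | hj
      · simp [hk₀x]
      · have := hk₀ j hj
        positivity
    · have := hk₀ k hkk₀
      positivity

theorem posDef_smul_one_sub_iff (t : ℝ) : (t • 1 - B).PosDef ↔ ∀ k, hB.eigenvalues k < t := by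
  have hH : (t • 1 - B).IsHermitian := by
    rw [← Algebra.algebraMap_eq_smul_one]
    exact (isHermitian_diagonal _).sub hB
  rw [hH.posDef_iff_eigenvalues_pos, ← Set.forall_mem_range,
    ← hH.spectrum_real_eq_range_eigenvalues, ← Algebra.algebraMap_eq_smul_one,
    ← spectrum.singleton_sub_eq, hB.spectrum_real_eq_range_eigenvalues]
  simp

end IsHermitian

end Matrix

/-- For a symmetric `W` (with zero diagonal) and `σ > 0`:
`λ₂(D_{𝟙𝟙ᵀ + σW} − (𝟙𝟙ᵀ + σW)) > 0` iff `λ_max(L_{[−W]}) < n/σ`, where for a symmetric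
matrix `M`, `D_M` is the diagonal matrix of row sums of `M` and `L_M = D_M − M`. -/
theorem stmt8 {n : ℕ} (hn : 2 ≤ n) (σ : ℝ) (hσ : 0 < σ)
    (W : Matrix (Fin n) (Fin n) ℝ)
    (J A L : Matrix (Fin n) (Fin n) ℝ)
    (hJ : J = Matrix.of fun _ _ => (1 : ℝ))
    (hAdef : A = Matrix.diagonal (fun i => ∑ j, (J + σ • W) i j) - (J + σ • W))
    (hLdef : L = Matrix.diagonal (fun i => ∑ j, (-W) i j) - (-W))
    (hA : A.IsHermitian) (hL : L.IsHermitian) :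
    0 < eigSorted hA ⟨1, by omega⟩ ↔ (⨆ k, hL.eigenvalues k) < n / σ := by
  subst hJ
  rw [← laplacian_apply] at hAdef hLdef
  have : Nonempty (Fin n) := ⟨⟨0, by omega⟩⟩
  have hAJ : A + of (fun _ _ => 1) = σ • ((n / σ : ℝ) • 1 - L) := by
    rw [hAdef, hLdef, map_add, map_smul, map_neg, laplacian_allOnes, Fintype.card_fin, smul_sub,
      smul_smul, mul_div_cancel₀ _ hσ.ne']
    module
  rw [eigSorted, lt_comp_sort_one_iff _ _ (by omega), ← hA.exists_posDefOnOrthogonal_iff,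
    ← hA.posDef_add_allOnes_iff (hAdef ▸ laplacian_mulVec_one _), hAJ, posDef_smul_iff hσ,
    hL.posDef_smul_one_sub_iff, ciSup_lt_iff_of_finite]
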